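/- Let rank(X₀) ≤ r, b = A X₀ + ν, and let Ψ̃ be a set of rank-one atoms with |Ψ̃| ≤ 3r. If X̃ minimizes ‖b − AX‖₂ over X ∈ span(Ψ̃), then ‖X₀ − X̃‖_F ≤ √((1+δ₄r)/(1−δ₄r)) ‖P_{Ψ̃}^⊥ X₀‖_F + (1/√(1−δ₃r)) ‖ν‖₂, where δ_k = δ_k(A) is the rank-restricted isometry constant. -/

import Mathlib

/-!
Least squares is linear in the data. Splitting `b = A X₀ + ν`, the minimiser decomposes as
`X̃ = X₁ + X₂`, where `A X₁` and `A X₂` are the orthogonal projections of `A X₀` and of `ν` onto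
`A (span Ψ̃)`. Since `X₂` has rank `≤ 3r`, the lower isometry bound gives
`‖X₂‖_F ≤ ‖ν‖₂ / √(1 - δ₃ᵣ)`. Since the projection beats the competitor `P X₀ ∈ span Ψ̃`,
`(1 - δ₄ᵣ) ‖X₀ - X₁‖_F² ≤ ‖A (X₀ - X₁)‖₂² ≤ ‖A (X₀ - P X₀)‖₂² ≤ (1 + δ₄ᵣ) ‖X₀ - P X₀‖_F²`,
both differences having rank `≤ 4r`. The triangle inequality combines the two bounds.
-/

open scoped BigOperators Matrix

/-- Frobenius (trace) inner product on complex matrices: `⟪X, Y⟫ = tr(Yᴴ X)`. -/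
noncomputable def frobInner {m n : ℕ} (X Y : Matrix (Fin m) (Fin n) ℂ) : ℂ :=
  (Yᴴ * X).trace

/-- Frobenius norm of a complex matrix. -/
noncomputable def frobNorm {m n : ℕ} (X : Matrix (Fin m) (Fin n) ℂ) : ℝ :=
  Real.sqrt (∑ i, ∑ j, ‖X i j‖ ^ 2)

/-- Euclidean norm on `ℂ^p`. -/
noncomputable def eNorm {p : ℕ} (v : Fin p → ℂ) : ℝ :=
  Real.sqrt (∑ k, ‖v k‖ ^ 2)

/-- Hermitian inner product on `ℂ^p` (linear in the first argument). -/
noncomputable def eInner {p : ℕ} (u v : Fin p → ℂ) : ℂ :=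
  ∑ k, (starRingEnd ℂ) (v k) * u k

/-- `A` satisfies the rank-`r` restricted isometry inequalities with constant `δ`:
`(1-δ)‖X‖_F² ≤ ‖A X‖₂² ≤ (1+δ)‖X‖_F²` for all `X` with `rank X ≤ r`. -/
def RIPwith {m n p : ℕ} (A : Matrix (Fin m) (Fin n) ℂ →ₗ[ℂ] (Fin p → ℂ)) (r : ℕ) (δ : ℝ) : Prop :=
  ∀ X : Matrix (Fin m) (Fin n) ℂ, X.rank ≤ r →
    (1 - δ) * frobNorm X ^ 2 ≤ eNorm (A X) ^ 2 ∧ eNorm (A X) ^ 2 ≤ (1 + δ) * frobNorm X ^ 2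

/-- `P` is the orthogonal projection onto the span of `S`
with respect to the Frobenius inner product. -/
def IsOrthProjOn {m n : ℕ} (P : Matrix (Fin m) (Fin n) ℂ →ₗ[ℂ] Matrix (Fin m) (Fin n) ℂ)
    (S : Set (Matrix (Fin m) (Fin n) ℂ)) : Prop :=
  (∀ X, P (P X) = P X) ∧ LinearMap.range P = Submodule.span ℂ S ∧
    (∀ X Y, frobInner (P X) Y = frobInner X (P Y))

/-- `B` is the adjoint of `A` w.r.t. the Frobenius and Euclidean inner products. -/
def IsAdjoint {m n p : ℕ} (A : Matrix (Fin m) (Fin n) ℂ →ₗ[ℂ] (Fin p → ℂ))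
    (B : (Fin p → ℂ) →ₗ[ℂ] Matrix (Fin m) (Fin n) ℂ) : Prop :=
  ∀ X v, eInner (A X) v = frobInner X (B v)

namespace Matrix

variable {m n K : Type*} [Fintype n] [Field K]

theorem rank_add_le (A B : Matrix m n K) : (A + B).rank ≤ A.rank + B.rank := by
  refine (Submodule.finrank_mono ?_).trans (Submodule.finrank_add_le_finrank_add_finrank _ _)
  rintro _ ⟨v, rfl⟩
  rw [mulVecLin_apply, add_mulVec]
  exact Submodule.add_mem_sup ⟨v, rfl⟩ ⟨v, rfl⟩

theorem rank_sub_le (A B : Matrix m n K) : (A - B).rank ≤ A.rank + B.rank := by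
  refine (Submodule.finrank_mono ?_).trans (Submodule.finrank_add_le_finrank_add_finrank _ _)
  rintro _ ⟨v, rfl⟩
  rw [mulVecLin_apply, sub_mulVec]
  exact Submodule.sub_mem _ (Submodule.mem_sup_left ⟨v, rfl⟩) (Submodule.mem_sup_right ⟨v, rfl⟩)

theorem rank_smul_le (c : K) (A : Matrix m n K) : (c • A).rank ≤ A.rank := by
  refine Submodule.finrank_mono ?_
  rintro _ ⟨v, rfl⟩
  rw [mulVecLin_apply, smul_mulVec]
  exact Submodule.smul_mem _ c ⟨v, rfl⟩

theorem rank_sum_le {ι : Type*} (s : Finset ι) (A : ι → Matrix m n K) :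
    (∑ i ∈ s, A i).rank ≤ ∑ i ∈ s, (A i).rank :=
  Finset.le_sum_of_subadditive rank (rank_zero (R := K)).le rank_add_le s A

theorem rank_le_card_of_mem_span {s : Finset (Matrix m n K)} (hs : ∀ B ∈ s, B.rank ≤ 1)
    {A : Matrix m n K} (hA : A ∈ Submodule.span K (s : Set (Matrix m n K))) : A.rank ≤ s.card := by
  obtain ⟨c, -, rfl⟩ := Submodule.mem_span_finset.1 hA
  calc (∑ B ∈ s, c B • B).rank ≤ ∑ B ∈ s, (c B • B).rank := rank_sum_le s _
    _ ≤ ∑ B ∈ s, 1 := Finset.sum_le_sum fun B hB => (rank_smul_le _ _).trans (hs B hB)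
    _ = s.card := by simp

end Matrix

namespace Submodule

variable {𝕜 E : Type*} [RCLike 𝕜] [NormedAddCommGroup E] [InnerProductSpace 𝕜 E]
  (K : Submodule 𝕜 E) [K.HasOrthogonalProjection]

theorem norm_sub_starProjection_le (u : E) {w : E} (hw : w ∈ K) :
    ‖u - K.starProjection u‖ ≤ ‖u - w‖ := by
  rw [starProjection_minimal]
  exact ciInf_le ⟨0, by rintro _ ⟨_, rfl⟩; positivity⟩ (⟨w, hw⟩ : K)

theorem starProjection_eq_of_forall_norm_sub_le {u v : E} (hv : v ∈ K)
    (h : ∀ w ∈ K, ‖u - v‖ ≤ ‖u - w‖) : K.starProjection u = v := by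
  refine eq_starProjection_of_mem_of_inner_eq_zero hv ((K.norm_eq_iInf_iff_inner_eq_zero hv).1 ?_)
  exact le_antisymm (le_ciInf fun w => h w w.2)
    (ciInf_le ⟨0, by rintro _ ⟨_, rfl⟩; positivity⟩ (⟨v, hv⟩ : K))

end Submodule

theorem LinearMap.exists_add_of_forall_norm_sub_le {𝕜 V E : Type*} [RCLike 𝕜]
    [AddCommGroup V] [Module 𝕜 V] [NormedAddCommGroup E] [InnerProductSpace 𝕜 E]
    (A : V →ₗ[𝕜] E) {S : Submodule 𝕜 V} [FiniteDimensional 𝕜 S] {x : V} (hx : x ∈ S) {y ν : E}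
    (hmin : ∀ z ∈ S, ‖y + ν - A x‖ ≤ ‖y + ν - A z‖) :
    ∃ x₁ ∈ S, ∃ x₂ ∈ S, x = x₁ + x₂ ∧ (∀ z ∈ S, ‖y - A x₁‖ ≤ ‖y - A z‖) ∧ ‖A x₂‖ ≤ ‖ν‖ := by
  set T := S.map A
  have hAx : T.starProjection (y + ν) = A x :=
    T.starProjection_eq_of_forall_norm_sub_le (Submodule.mem_map_of_mem hx) <| by
      rintro _ ⟨z, hz, rfl⟩
      exact hmin z hz
  obtain ⟨x₂, hx₂, hAx₂⟩ := Submodule.mem_map.1 (T.starProjection_apply_mem ν)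
  refine ⟨x - x₂, S.sub_mem hx hx₂, x₂, hx₂, (sub_add_cancel x x₂).symm, ?_, ?_⟩
  · have hAx₁ : A (x - x₂) = T.starProjection y := by
      rw [map_sub, ← hAx, hAx₂, map_add, add_sub_cancel_right]
    intro z hz
    rw [hAx₁]
    exact T.norm_sub_starProjection_le y (Submodule.mem_map_of_mem hz)
  · rw [hAx₂]
    exact T.norm_starProjection_apply_le ν

theorem eNorm_eq_norm {p : ℕ} (v : Fin p → ℂ) :
    eNorm v = ‖(WithLp.toLp 2 v : EuclideanSpace ℂ (Fin p))‖ := by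
  rw [EuclideanSpace.norm_eq]
  rfl

theorem frobNorm_eq_norm {m n : ℕ} (X : Matrix (Fin m) (Fin n) ℂ) :
    frobNorm X = ‖(WithLp.toLp 2 (Function.uncurry X) : EuclideanSpace ℂ (Fin m × Fin n))‖ := by
  rw [EuclideanSpace.norm_eq, Fintype.sum_prod_type]
  rfl

theorem frobNorm_nonneg {m n : ℕ} (X : Matrix (Fin m) (Fin n) ℂ) : 0 ≤ frobNorm X :=
  Real.sqrt_nonneg _

theorem eNorm_nonneg {p : ℕ} (v : Fin p → ℂ) : 0 ≤ eNorm v :=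
  Real.sqrt_nonneg _

theorem frobNorm_sub_le {m n : ℕ} (X Y : Matrix (Fin m) (Fin n) ℂ) :
    frobNorm (X - Y) ≤ frobNorm X + frobNorm Y := by
  have hsub : (WithLp.toLp 2 (Function.uncurry (X - Y)) : EuclideanSpace ℂ (Fin m × Fin n)) =
      WithLp.toLp 2 (Function.uncurry X) - WithLp.toLp 2 (Function.uncurry Y) := by
    ext; rfl
  rw [frobNorm_eq_norm, frobNorm_eq_norm, frobNorm_eq_norm, hsub]
  exact norm_sub_le _ _

namespace RIPwith

variable {m n p r : ℕ} {A : Matrix (Fin m) (Fin n) ℂ →ₗ[ℂ] (Fin p → ℂ)} {δ : ℝ}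
  {X Y : Matrix (Fin m) (Fin n) ℂ}

theorem frobNorm_le (h : RIPwith A r δ) (hδ : δ < 1) (hX : X.rank ≤ r) :
    frobNorm X ≤ 1 / Real.sqrt (1 - δ) * eNorm (A X) := by
  have hδ' : 0 < Real.sqrt (1 - δ) := Real.sqrt_pos.2 (by linarith)
  rw [one_div_mul_eq_div, le_div_iff₀ hδ']
  refine (pow_le_pow_iff_left₀ (by positivity [frobNorm_nonneg X]) (eNorm_nonneg _)
    two_ne_zero).1 ?_
  rw [mul_pow, Real.sq_sqrt (by linarith), mul_comm]
  exact (h X hX).1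

theorem frobNorm_le_of_eNorm_le (h : RIPwith A r δ) (hδ : δ < 1) (hX : X.rank ≤ r)
    (hY : Y.rank ≤ r) (hXY : eNorm (A X) ≤ eNorm (A Y)) :
    frobNorm X ≤ Real.sqrt ((1 + δ) / (1 - δ)) * frobNorm Y := by
  have hsq : frobNorm X ^ 2 ≤ (1 + δ) / (1 - δ) * frobNorm Y ^ 2 := by
    rw [div_mul_eq_mul_div, le_div_iff₀ (by linarith), mul_comm]
    calc (1 - δ) * frobNorm X ^ 2 ≤ eNorm (A X) ^ 2 := (h X hX).1
      _ ≤ eNorm (A Y) ^ 2 := pow_le_pow_left₀ (eNorm_nonneg _) hXY 2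
      _ ≤ (1 + δ) * frobNorm Y ^ 2 := (h Y hY).2
  calc frobNorm X = Real.sqrt (frobNorm X ^ 2) := (Real.sqrt_sq (frobNorm_nonneg X)).symm
    _ ≤ Real.sqrt ((1 + δ) / (1 - δ) * frobNorm Y ^ 2) := Real.sqrt_le_sqrt hsq
    _ = Real.sqrt ((1 + δ) / (1 - δ)) * frobNorm Y := by
      rw [Real.sqrt_mul' _ (sq_nonneg _), Real.sqrt_sq (frobNorm_nonneg Y)]

end RIPwith

theorem estimation_lemma_general {m n p r : ℕ}
    (A : Matrix (Fin m) (Fin n) ℂ →ₗ[ℂ] (Fin p → ℂ))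
    (δ3 δ4 : ℝ) (h34 : δ3 ≤ δ4) (hδ41 : δ4 < 1)
    (hA3 : RIPwith A (3 * r) δ3) (hA4 : RIPwith A (4 * r) δ4)
    (Ψtilde : Finset (Matrix (Fin m) (Fin n) ℂ))
    (hΨ : ∀ ψ ∈ Ψtilde, ψ.rank = 1) (hcard : Ψtilde.card ≤ 3 * r)
    (Ptilde : Matrix (Fin m) (Fin n) ℂ →ₗ[ℂ] Matrix (Fin m) (Fin n) ℂ)
    (hPtilde : IsOrthProjOn Ptilde (Ψtilde : Set (Matrix (Fin m) (Fin n) ℂ)))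
    (X₀ : Matrix (Fin m) (Fin n) ℂ) (hX₀ : X₀.rank ≤ r)
    (ν : Fin p → ℂ) (b : Fin p → ℂ) (hb : b = A X₀ + ν)
    (Xtilde : Matrix (Fin m) (Fin n) ℂ)
    (hmem : Xtilde ∈ Submodule.span ℂ (Ψtilde : Set (Matrix (Fin m) (Fin n) ℂ)))
    (hmin : ∀ X ∈ Submodule.span ℂ (Ψtilde : Set (Matrix (Fin m) (Fin n) ℂ)),
      eNorm (b - A Xtilde) ≤ eNorm (b - A X)) :
    frobNorm (X₀ - Xtilde)
      ≤ Real.sqrt ((1 + δ4) / (1 - δ4)) * frobNorm (X₀ - Ptilde X₀)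
        + (1 / Real.sqrt (1 - δ3)) * eNorm ν := by
  set S := Submodule.span ℂ (Ψtilde : Set (Matrix (Fin m) (Fin n) ℂ))
  have hrank : ∀ Z ∈ S, Z.rank ≤ 3 * r := fun Z hZ =>
    (Matrix.rank_le_card_of_mem_span (fun ψ hψ => (hΨ ψ hψ).le) hZ).trans hcard
  have hrank_sub : ∀ Z ∈ S, (X₀ - Z).rank ≤ 4 * r := fun Z hZ => by
    have := (Matrix.rank_sub_le X₀ Z).trans (add_le_add hX₀ (hrank Z hZ))
    omega
  let T := (WithLp.linearEquiv 2 ℂ (Fin p → ℂ)).symm.toLinearMap ∘ₗ A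
  obtain ⟨X₁, hX₁, X₂, hX₂, rfl, hmin₁, hX₂ν⟩ := T.exists_add_of_forall_norm_sub_le hmem
    (y := WithLp.toLp 2 (A X₀)) (ν := WithLp.toLp 2 ν) (by simpa [T, hb, eNorm_eq_norm] using hmin)
  replace hmin₁ : ∀ Z ∈ S, eNorm (A (X₀ - X₁)) ≤ eNorm (A (X₀ - Z)) := by
    simpa [T, eNorm_eq_norm] using hmin₁
  replace hX₂ν : eNorm (A X₂) ≤ eNorm ν := by simpa [T, eNorm_eq_norm] using hX₂ν
  have hPX₀ : Ptilde X₀ ∈ S := hPtilde.2.1.le (LinearMap.mem_range_self Ptilde X₀)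
  have hsignal := hA4.frobNorm_le_of_eNorm_le hδ41 (hrank_sub X₁ hX₁) (hrank_sub _ hPX₀)
    (hmin₁ _ hPX₀)
  have hnoise : frobNorm X₂ ≤ 1 / Real.sqrt (1 - δ3) * eNorm ν :=
    (hA3.frobNorm_le (h34.trans_lt hδ41) (hrank X₂ hX₂)).trans
      (mul_le_mul_of_nonneg_left hX₂ν (by positivity))
  calc frobNorm (X₀ - (X₁ + X₂)) = frobNorm (X₀ - X₁ - X₂) := by rw [sub_add_eq_sub_sub]
    _ ≤ frobNorm (X₀ - X₁) + frobNorm X₂ := frobNorm_sub_le _ _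
    _ ≤ _ := add_le_add hsignal hnoise

/-- Least-squares estimation lemma. If `rank X₀ ≤ r`, `b = A X₀ + ν`, and `X̃`
minimizes `‖b − A X‖₂` over `X ∈ span Ψ̃` with `|Ψ̃| ≤ 3r`, then
`‖X₀ − X̃‖_F ≤ √((1+δ₄ᵣ)/(1−δ₄ᵣ)) ‖P_{Ψ̃}^⊥ X₀‖_F + ‖ν‖₂/√(1−δ₃ᵣ)`. -/
theorem estimation_lemma {m n p r : ℕ}
    (A : Matrix (Fin m) (Fin n) ℂ →ₗ[ℂ] (Fin p → ℂ))
    (δ3 δ4 : ℝ) (hδ30 : 0 ≤ δ3) (h34 : δ3 ≤ δ4) (hδ41 : δ4 < 1)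
    (hA3 : RIPwith A (3 * r) δ3) (hA4 : RIPwith A (4 * r) δ4)
    (Ψtilde : Finset (Matrix (Fin m) (Fin n) ℂ))
    (hΨ : ∀ ψ ∈ Ψtilde, ψ.rank = 1) (hcard : Ψtilde.card ≤ 3 * r)
    (Ptilde : Matrix (Fin m) (Fin n) ℂ →ₗ[ℂ] Matrix (Fin m) (Fin n) ℂ)
    (hPtilde : IsOrthProjOn Ptilde (Ψtilde : Set (Matrix (Fin m) (Fin n) ℂ)))
    (X₀ : Matrix (Fin m) (Fin n) ℂ) (hX₀ : X₀.rank ≤ r)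
    (ν : Fin p → ℂ) (b : Fin p → ℂ) (hb : b = A X₀ + ν)
    (Xtilde : Matrix (Fin m) (Fin n) ℂ)
    (hmem : Xtilde ∈ Submodule.span ℂ (Ψtilde : Set (Matrix (Fin m) (Fin n) ℂ)))
    (hmin : ∀ X ∈ Submodule.span ℂ (Ψtilde : Set (Matrix (Fin m) (Fin n) ℂ)),
      eNorm (b - A Xtilde) ≤ eNorm (b - A X)) :
    frobNorm (X₀ - Xtilde)
      ≤ Real.sqrt ((1 + δ4) / (1 - δ4)) * frobNorm (X₀ - Ptilde X₀)
        + (1 / Real.sqrt (1 - δ3)) * eNorm ν :=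
  estimation_lemma_general A δ3 δ4 h34 hδ41 hA3 hA4 Ψtilde hΨ hcard Ptilde hPtilde X₀ hX₀ ν b hb
    Xtilde hmem hmin
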